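/- For λ > 0, as x → ∞, 1 - F_λ(x) = (2φ(x)/x)[1 - x^{-2} + O(x^{-4})], i.e., (1 - F_λ(x) - (2φ(x)/x)(1 - x^{-2})) / (2φ(x) x^{-5}) is bounded for large x. -/

import Mathlib

/-!
With `Q = 1 - Φ` the standard normal tail, the symmetry `Φ (-y) = Q y` turns the skew-normal
tail into `1 - F_λ(x) = 2 Q(x) - 2 ∫_x^∞ φ(t) Q(λt) dt`. Mills' expansion
`Q(x) = φ(x) (x⁻¹ - x⁻³) + O(φ(x) x⁻⁵)` comes from the antiderivative
`Q(x) - φ(x) (x⁻¹ - x⁻³)` of `-3 x⁻⁴ φ(x)`, whose tail integral is at most `3 x⁻⁵ φ(x)`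
because `∫_x^∞ t φ(t) dt = φ(x)`. The correction integral is at most
`Q(x) Q(λx) ≤ φ(x) x⁻¹ Q(λx)`, and `Q(λx)` decays faster than any power of `x`.
-/

open Real MeasureTheory Filter

noncomputable def stdPhi (x : ℝ) : ℝ := (Real.sqrt (2 * Real.pi))⁻¹ * Real.exp (-x ^ 2 / 2)

noncomputable def stdCdf (x : ℝ) : ℝ := ∫ t in Set.Iic x, stdPhi t

noncomputable def snCdf (l x : ℝ) : ℝ := ∫ t in Set.Iic x, 2 * stdPhi t * stdCdf (l * t)

open Set

lemma stdPhi_eq_mul_exp (x : ℝ) :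
    stdPhi x = (√(2 * π))⁻¹ * exp (-(1 / 2) * x ^ 2) := by
  rw [stdPhi]; ring_nf

lemma stdPhi_nonneg (x : ℝ) : 0 ≤ stdPhi x := by
  rw [stdPhi]; positivity

lemma continuous_stdPhi : Continuous stdPhi := by
  unfold stdPhi; fun_prop

lemma stdPhi_neg (x : ℝ) : stdPhi (-x) = stdPhi x := by
  simp [stdPhi]

lemma integrable_stdPhi : Integrable stdPhi := by
  simp_rw [funext stdPhi_eq_mul_exp]
  exact (integrable_exp_neg_mul_sq (by norm_num)).const_mul _

lemma integral_stdPhi : ∫ x, stdPhi x = 1 := by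
  simp_rw [stdPhi_eq_mul_exp]
  rw [integral_const_mul, integral_gaussian, show π / (1 / 2) = 2 * π by ring]
  exact inv_mul_cancel₀ (by positivity)

lemma integrable_mul_stdPhi : Integrable fun t ↦ t * stdPhi t := by
  simp_rw [stdPhi_eq_mul_exp, mul_left_comm _ (√(2 * π))⁻¹]
  exact (integrable_mul_exp_neg_mul_sq (by norm_num)).const_mul _

lemma hasDerivAt_stdPhi (x : ℝ) : HasDerivAt stdPhi (-x * stdPhi x) x := by
  have h : HasDerivAt (fun y : ℝ ↦ -y ^ 2 / 2) (-x) x :=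
    ((hasDerivAt_pow 2 x).neg.div_const 2).congr_deriv (by norm_num; ring)
  exact (h.exp.const_mul _).congr_deriv (by rw [stdPhi]; ring)

lemma tendsto_pow_mul_stdPhi (n : ℕ) :
    Tendsto (fun x ↦ x ^ n * stdPhi x) atTop (nhds 0) := by
  have h := (rpow_mul_exp_neg_mul_sq_isLittleO_exp_neg (by norm_num : (0 : ℝ) < 1 / 2) n)
    |>.const_mul_left (√(2 * π))⁻¹
  refine (h.trans_tendsto ?_).congr' ?_
  · exact tendsto_exp_atBot.comp (tendsto_id.const_mul_atTop_of_neg (by norm_num))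
  · filter_upwards with x
    rw [rpow_natCast, stdPhi_eq_mul_exp, mul_left_comm]

lemma tendsto_stdPhi : Tendsto stdPhi atTop (nhds 0) := by
  simpa using tendsto_pow_mul_stdPhi 0

lemma integral_Ioi_mul_stdPhi (x : ℝ) : ∫ t in Ioi x, t * stdPhi t = stdPhi x := by
  have h := integral_Ioi_of_hasDerivAt_of_tendsto' (f := fun t ↦ -stdPhi t) (a := x) (m := 0)
    (fun t _ ↦ ((hasDerivAt_stdPhi t).neg).congr_deriv (by ring))
    integrable_mul_stdPhi.integrableOn (by simpa using tendsto_stdPhi.neg)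
  simpa using h

lemma setIntegral_Ioi_mul_stdPhi_le {h : ℝ → ℝ} {x c : ℝ}
    (hh : IntegrableOn (fun t ↦ h t * stdPhi t) (Ioi x)) (hle : ∀ t > x, h t ≤ c * t) :
    ∫ t in Ioi x, h t * stdPhi t ≤ c * stdPhi x := by
  calc ∫ t in Ioi x, h t * stdPhi t ≤ ∫ t in Ioi x, c * (t * stdPhi t) :=
        setIntegral_mono_on hh (integrable_mul_stdPhi.integrableOn.const_mul c) measurableSet_Ioi
          fun t ht ↦ by
            rw [← mul_assoc]; exact mul_le_mul_of_nonneg_right (hle t ht) (stdPhi_nonneg t)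
    _ = c * stdPhi x := by rw [integral_const_mul, integral_Ioi_mul_stdPhi]

noncomputable def stdTail (x : ℝ) : ℝ := ∫ t in Ioi x, stdPhi t

lemma stdCdf_add_stdTail (x : ℝ) : stdCdf x + stdTail x = 1 :=
  integral_stdPhi ▸ intervalIntegral.integral_Iic_add_Ioi integrable_stdPhi.integrableOn
    integrable_stdPhi.integrableOn

lemma stdTail_eq_one_sub (x : ℝ) : stdTail x = 1 - stdCdf x := by
  linarith [stdCdf_add_stdTail x]

lemma stdCdf_neg (x : ℝ) : stdCdf (-x) = stdTail x := by
  rw [stdCdf, ← integral_comp_neg_Ioi]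
  simp_rw [stdPhi_neg]
  rfl

lemma stdCdf_nonneg (x : ℝ) : 0 ≤ stdCdf x :=
  setIntegral_nonneg measurableSet_Iic fun t _ ↦ stdPhi_nonneg t

lemma stdTail_nonneg (x : ℝ) : 0 ≤ stdTail x :=
  setIntegral_nonneg measurableSet_Ioi fun t _ ↦ stdPhi_nonneg t

lemma stdCdf_mem_Icc (x : ℝ) : stdCdf x ∈ Icc 0 1 :=
  ⟨stdCdf_nonneg x, by linarith [stdCdf_add_stdTail x, stdTail_nonneg x]⟩

lemma stdTail_mem_Icc (x : ℝ) : stdTail x ∈ Icc 0 1 :=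
  ⟨stdTail_nonneg x, by linarith [stdCdf_add_stdTail x, stdCdf_nonneg x]⟩

lemma stdTail_antitone : Antitone stdTail := fun _ _ hab ↦
  setIntegral_mono_set integrable_stdPhi.integrableOn (.of_forall stdPhi_nonneg)
    (Ioi_subset_Ioi hab).eventuallyLE

lemma hasDerivAt_stdCdf (x : ℝ) : HasDerivAt stdCdf (stdPhi x) x := by
  have hcdf : ∀ y, stdCdf y = stdCdf 0 + ∫ t in (0 : ℝ)..y, stdPhi t := fun y ↦ by
    rw [← intervalIntegral.integral_Iic_sub_Iic integrable_stdPhi.integrableOn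
      integrable_stdPhi.integrableOn, stdCdf, stdCdf, add_sub_cancel]
  rw [funext hcdf]
  exact (intervalIntegral.integral_hasDerivAt_right integrable_stdPhi.intervalIntegrable
    (continuous_stdPhi.stronglyMeasurableAtFilter _ _) continuous_stdPhi.continuousAt).const_add _

@[fun_prop]
lemma continuous_stdCdf : Continuous stdCdf :=
  continuous_iff_continuousAt.2 fun x ↦ (hasDerivAt_stdCdf x).continuousAt

@[fun_prop]
lemma continuous_stdTail : Continuous stdTail := by
  rw [funext stdTail_eq_one_sub]
  exact continuous_const.sub continuous_stdCdf

lemma hasDerivAt_stdTail (x : ℝ) : HasDerivAt stdTail (-stdPhi x) x := by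
  simpa only [← funext stdTail_eq_one_sub] using (hasDerivAt_stdCdf x).const_sub 1

lemma stdTail_le_stdPhi_mul_inv {x : ℝ} (hx : 0 < x) : stdTail x ≤ stdPhi x * x⁻¹ := by
  have h := setIntegral_Ioi_mul_stdPhi_le (h := fun _ ↦ 1) (c := x⁻¹)
    (by simpa using integrable_stdPhi.integrableOn)
    fun t ht ↦ by rw [inv_mul_eq_div, one_le_div hx]; exact ht.le
  simp_rw [one_mul] at h
  rwa [mul_comm] at h

lemma tendsto_pow_mul_stdTail (n : ℕ) :
    Tendsto (fun x ↦ x ^ n * stdTail x) atTop (nhds 0) := by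
  refine tendsto_of_tendsto_of_tendsto_of_le_of_le' tendsto_const_nhds
    (tendsto_pow_mul_stdPhi n) ?_ ?_
  · filter_upwards [eventually_ge_atTop 0] with x hx
    exact mul_nonneg (pow_nonneg hx n) (stdTail_nonneg x)
  · filter_upwards [eventually_ge_atTop 1] with x hx
    have hx0 : 0 < x := one_pos.trans_le hx
    gcongr
    calc stdTail x ≤ stdPhi x * x⁻¹ := stdTail_le_stdPhi_mul_inv hx0
      _ ≤ stdPhi x := mul_le_of_le_one_right (stdPhi_nonneg x) (inv_le_one_of_one_le₀ hx)

lemma tendsto_stdTail : Tendsto stdTail atTop (nhds 0) := by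
  simpa using tendsto_pow_mul_stdTail 0

lemma integrableOn_inv_pow_mul_stdPhi {x : ℝ} (hx : 0 < x) (c : ℝ) (n : ℕ) :
    IntegrableOn (fun t ↦ c * t⁻¹ ^ n * stdPhi t) (Ioi x) := by
  simp_rw [mul_assoc]
  refine (integrable_stdPhi.integrableOn.bdd_mul (c := x⁻¹ ^ n) (by fun_prop) ?_).const_mul c
  filter_upwards [ae_restrict_mem measurableSet_Ioi] with t ht
  have ht0 : 0 < t := hx.trans ht
  rw [norm_pow, norm_inv, Real.norm_of_nonneg ht0.le]
  gcongr
  exact ht.le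

lemma hasDerivAt_stdTail_sub_mills {x : ℝ} (hx : x ≠ 0) :
    HasDerivAt (fun y ↦ stdTail y - stdPhi y * (y⁻¹ - y⁻¹ ^ 3)) (-(3 * x⁻¹ ^ 4 * stdPhi x)) x := by
  have hinv := hasDerivAt_inv hx
  refine ((hasDerivAt_stdTail x).sub
    ((hasDerivAt_stdPhi x).mul (hinv.sub (hinv.pow 3)))).congr_deriv ?_
  simp only [Pi.sub_apply, Pi.pow_apply, inv_pow]
  field_simp
  ring

lemma stdTail_sub_mills_eq_integral {x : ℝ} (hx : 0 < x) :
    stdTail x - stdPhi x * (x⁻¹ - x⁻¹ ^ 3) = ∫ t in Ioi x, 3 * t⁻¹ ^ 4 * stdPhi t := by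
  have hlim : Tendsto (fun y ↦ stdTail y - stdPhi y * (y⁻¹ - y⁻¹ ^ 3)) atTop (nhds 0) := by
    simpa using tendsto_stdTail.sub
      (tendsto_stdPhi.mul (tendsto_inv_atTop_zero.sub (tendsto_inv_atTop_zero.pow 3)))
  have h := integral_Ioi_of_hasDerivAt_of_tendsto'
    (fun t ht ↦ hasDerivAt_stdTail_sub_mills (hx.trans_le ht).ne')
    (integrableOn_inv_pow_mul_stdPhi hx 3 4).neg hlim
  rw [integral_neg] at h
  linarith

lemma abs_stdTail_sub_mills_le {x : ℝ} (hx : 0 < x) :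
    |stdTail x - stdPhi x * (x⁻¹ - x⁻¹ ^ 3)| ≤ 3 * (stdPhi x * x⁻¹ ^ 5) := by
  rw [stdTail_sub_mills_eq_integral hx, abs_of_nonneg (setIntegral_nonneg measurableSet_Ioi
    fun t _ ↦ mul_nonneg (by positivity) (stdPhi_nonneg t))]
  calc ∫ t in Ioi x, 3 * t⁻¹ ^ 4 * stdPhi t ≤ 3 * x⁻¹ ^ 5 * stdPhi x :=
        setIntegral_Ioi_mul_stdPhi_le (integrableOn_inv_pow_mul_stdPhi hx 3 4) fun t ht ↦ by
          have ht0 : 0 < t := hx.trans ht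
          have : t⁻¹ ^ 5 ≤ x⁻¹ ^ 5 := by gcongr
          calc 3 * t⁻¹ ^ 4 = 3 * t⁻¹ ^ 5 * t := by field_simp
            _ ≤ 3 * x⁻¹ ^ 5 * t := by gcongr
    _ = 3 * (stdPhi x * x⁻¹ ^ 5) := by ring

lemma integrable_stdPhi_mul {g : ℝ → ℝ} (hg : Continuous g) (hg01 : ∀ t, g t ∈ Icc 0 1) :
    Integrable fun t ↦ stdPhi t * g t :=
  integrable_stdPhi.mul_bdd (c := 1) hg.aestronglyMeasurable <| .of_forall fun t ↦ by
    rw [Real.norm_of_nonneg (hg01 t).1]; exact (hg01 t).2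

lemma integral_skewPdf (l : ℝ) : ∫ t, 2 * stdPhi t * stdCdf (l * t) = 1 := by
  have hcdf := integrable_stdPhi_mul (by fun_prop) fun t ↦ stdCdf_mem_Icc (l * t)
  have htail := integrable_stdPhi_mul (by fun_prop) fun t ↦ stdTail_mem_Icc (l * t)
  have hsymm : ∫ t, stdPhi t * stdCdf (l * t) = ∫ t, stdPhi t * stdTail (l * t) := by
    rw [← integral_neg_eq_self]
    simp only [stdPhi_neg, mul_neg, stdCdf_neg]
  have hsum : (∫ t, stdPhi t * stdCdf (l * t)) + ∫ t, stdPhi t * stdTail (l * t) = 1 := by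
    rw [← integral_add hcdf htail]
    simp only [← mul_add, stdCdf_add_stdTail, mul_one, integral_stdPhi]
  simp only [mul_assoc, integral_const_mul]
  linarith

lemma one_sub_snCdf (l x : ℝ) :
    1 - snCdf l x = 2 * (stdTail x - ∫ t in Ioi x, stdPhi t * stdTail (l * t)) := by
  have hint : Integrable fun t ↦ 2 * stdPhi t * stdCdf (l * t) := by
    simpa only [mul_assoc] using
      (integrable_stdPhi_mul (by fun_prop) fun t ↦ stdCdf_mem_Icc (l * t)).const_mul 2
  have htail := integrable_stdPhi_mul (by fun_prop) fun t ↦ stdTail_mem_Icc (l * t)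
  rw [← integral_skewPdf l, ← intervalIntegral.integral_Iic_add_Ioi hint.integrableOn
    hint.integrableOn, snCdf, add_sub_cancel_left, stdTail, ← integral_sub
    integrable_stdPhi.integrableOn htail.integrableOn, ← integral_const_mul]
  refine setIntegral_congr_fun measurableSet_Ioi fun t _ ↦ ?_
  linear_combination 2 * stdPhi t * stdCdf_add_stdTail (l * t)

lemma integral_Ioi_stdPhi_mul_stdTail_le {l : ℝ} (hl : 0 ≤ l) (x : ℝ) :
    ∫ t in Ioi x, stdPhi t * stdTail (l * t) ≤ stdTail x * stdTail (l * x) := by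
  have htail := integrable_stdPhi_mul (by fun_prop) fun t ↦ stdTail_mem_Icc (l * t)
  calc ∫ t in Ioi x, stdPhi t * stdTail (l * t) ≤ ∫ t in Ioi x, stdPhi t * stdTail (l * x) :=
        setIntegral_mono_on htail.integrableOn (integrable_stdPhi.integrableOn.mul_const _)
          measurableSet_Ioi fun t ht ↦ mul_le_mul_of_nonneg_left
            (stdTail_antitone (mul_le_mul_of_nonneg_left ht.le hl)) (stdPhi_nonneg t)
    _ = stdTail x * stdTail (l * x) := integral_mul_const _ _

lemma isBigO_integral_Ioi_stdPhi_mul_stdTail {l : ℝ} (hl : 0 < l) :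
    (fun x ↦ ∫ t in Ioi x, stdPhi t * stdTail (l * t)) =O[atTop]
      fun x ↦ stdPhi x * x⁻¹ ^ 5 := by
  have hdecay : Tendsto (fun x ↦ x ^ 4 * stdTail (l * x)) atTop (nhds 0) := by
    have h := ((tendsto_pow_mul_stdTail 4).comp (tendsto_id.const_mul_atTop hl)).const_mul
      (l⁻¹ ^ 4)
    rw [mul_zero] at h
    refine h.congr fun x ↦ ?_
    simp only [Function.comp_apply, id, ← mul_assoc, ← mul_pow, inv_mul_cancel₀ hl.ne', one_mul]
  refine .of_bound' ?_
  filter_upwards [hdecay.eventually_le_const one_pos, eventually_gt_atTop 0] with x hx1 hx0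
  have hR0 : 0 ≤ ∫ t in Ioi x, stdPhi t * stdTail (l * t) :=
    setIntegral_nonneg measurableSet_Ioi fun t _ ↦
      mul_nonneg (stdPhi_nonneg t) (stdTail_nonneg _)
  rw [Real.norm_of_nonneg hR0, Real.norm_of_nonneg (by have := stdPhi_nonneg x; positivity)]
  calc ∫ t in Ioi x, stdPhi t * stdTail (l * t) ≤ stdTail x * stdTail (l * x) :=
        integral_Ioi_stdPhi_mul_stdTail_le hl.le x
    _ ≤ stdPhi x * x⁻¹ * stdTail (l * x) :=
        mul_le_mul_of_nonneg_right (stdTail_le_stdPhi_mul_inv hx0) (stdTail_nonneg _)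
    _ = stdPhi x * x⁻¹ ^ 5 * (x ^ 4 * stdTail (l * x)) := by field_simp
    _ ≤ stdPhi x * x⁻¹ ^ 5 := mul_le_of_le_one_right (by have := stdPhi_nonneg x; positivity) hx1

lemma isBigO_stdTail_sub_mills :
    (fun x ↦ stdTail x - stdPhi x * (x⁻¹ - x⁻¹ ^ 3)) =O[atTop] fun x ↦ stdPhi x * x⁻¹ ^ 5 := by
  refine .of_bound 3 ?_
  filter_upwards [eventually_gt_atTop 0] with x hx
  rw [Real.norm_eq_abs, Real.norm_of_nonneg (by have := stdPhi_nonneg x; positivity)]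
  exact abs_stdTail_sub_mills_le hx

theorem stmt_5 (l : ℝ) (hl : 0 < l) :
    (fun x : ℝ => 1 - snCdf l x - (2 * stdPhi x / x) * (1 - x⁻¹ ^ 2)) =O[atTop]
      (fun x : ℝ => 2 * stdPhi x * x⁻¹ ^ 5) := by
  have hsplit : (fun x : ℝ => 1 - snCdf l x - (2 * stdPhi x / x) * (1 - x⁻¹ ^ 2)) = fun x ↦
      2 * ((stdTail x - stdPhi x * (x⁻¹ - x⁻¹ ^ 3)) -
        ∫ t in Ioi x, stdPhi t * stdTail (l * t)) := by
    ext x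
    rw [one_sub_snCdf]
    ring
  have hO := isBigO_stdTail_sub_mills.sub (isBigO_integral_Ioi_stdPhi_mul_stdTail hl)
  rw [hsplit]
  exact (hO.const_mul_left 2 |>.const_mul_right two_ne_zero).congr_right fun x ↦ by ring
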